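/- arXiv:1910.14629 — 8 statements merged into one kernel-verified Lean document; each statement's English description precedes it below -/
import Mathlib

section
/- For every irreducible element λ of R, the subsets Δ, C_λ and C^λ are subgroups of the abelian group C; moreover Δ ⊆ C_λ and Δ ⊆ C^λ; C_λ = C_{λ*} and C^λ = C^{λ*}; and C_λ ⊆ C^μ for every irreducible μ of R that is not a *-associate of λ. -/
/-!
Each of `Δ`, `C_λ`, `C^λ` is the image under `π` of `χ⁻¹(P)` for a submonoid `P` of `R`
closed under associates: the units, the associates of powers of `S(λ)`, and the elements
prime to `λ`. For such `P` the image is a subgroup of `C`: (Δ2) makes it closed under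
addition, (Δ3) under negation, and `Δ₀` is a unit since `Δ₀ ~ Δ₀²`. The remaining
relations hold because the involution permutes the primes of `R`, `S(λ) ~ S(λ*)`, and the
only prime divisors of `S(λ)` are `λ` and `λ*`.
-/

open Classical in
/-- `S(λ)`: `λ` itself if `λ` is an associate of its involutive image `λ*`,
and `λ · λ*` otherwise. -/
noncomputable def Sdual {R : Type*} [CommRing R] (σ : R →+* R) (l : R) : R :=
  if Associated l (σ l) then l else l * σ l

/-- `λ` and `μ` are `*`-associates: `λ` is an associate of `μ` or of `μ* = σ μ`. -/
def StarAssoc {R : Type*} [CommRing R] (σ : R →+* R) (l m : R) : Prop :=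
  Associated l m ∨ Associated l (σ m)

/-- The subset `Δ ⊆ C` of classes of elements whose `χ`-value is a unit. -/
def DeltaSet {K C R : Type*} [AddCommMonoid K] [AddCommGroup C] [CommRing R]
    (π : K →+ C) (χ : K → R) : Set C :=
  {c | ∃ k, π k = c ∧ IsUnit (χ k)}

/-- The `λ`-primary part `C_λ ⊆ C`: classes of elements whose `χ`-value is an
associate of a power of `S(λ)`. -/
def Cprim {K C R : Type*} [AddCommMonoid K] [AddCommGroup C] [CommRing R]
    (σ : R →+* R) (π : K →+ C) (χ : K → R) (l : R) : Set C :=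
  {c | ∃ k, π k = c ∧ ∃ n : ℕ, Associated (χ k) (Sdual σ l ^ n)}

/-- The coprimary part `C^λ ⊆ C`: classes of elements whose `χ`-value is not
divisible by `λ`. -/
def Cco {K C R : Type*} [AddCommMonoid K] [AddCommGroup C] [CommRing R]
    (π : K →+ C) (χ : K → R) (l : R) : Set C :=
  {c | ∃ k, π k = c ∧ ¬ l ∣ χ k}

section Involution

variable {R : Type*} [CommRing R] {σ : R →+* R}

theorem associated_sdual_map (hσ : Function.Involutive σ) (l : R) :
    Associated (Sdual σ l) (Sdual σ (σ l)) := by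
  unfold Sdual
  rw [hσ l]
  by_cases h : Associated l (σ l)
  · rw [if_pos h, if_pos h.symm]
    exact h
  · rw [if_neg h, if_neg fun h' => h h'.symm, mul_comm]

theorem Prime.map_of_involutive (hσ : Function.Involutive σ) {p : R} (hp : Prime p) :
    Prime (σ p) :=
  (MulEquiv.prime_iff (RingEquiv.ofBijective σ hσ.bijective)).mpr hp

theorem map_dvd_iff_of_associated_map (hσ : Function.Involutive σ) {a : R}
    (ha : Associated (σ a) a) (m : R) : σ m ∣ a ↔ m ∣ a :=
  ⟨fun h => by simpa only [hσ m] using (map_dvd σ h).trans ha.dvd,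
    fun h => (map_dvd σ h).trans ha.dvd⟩

theorem starAssoc_of_dvd_sdual [IsDomain R] (hσ : Function.Involutive σ) {l μ : R}
    (hl : Prime l) (hμ : Prime μ) (h : μ ∣ Sdual σ l) : StarAssoc σ l μ := by
  unfold Sdual at h
  split_ifs at h
  · exact Or.inl (hμ.associated_of_dvd hl h).symm
  rcases hμ.dvd_mul.mp h with h | h
  · exact Or.inl (hμ.associated_of_dvd hl h).symm
  · right
    simpa only [hσ l] using ((hμ.associated_of_dvd (hl.map_of_involutive hσ) h).map σ).symm

end Involution

theorem isUnit_of_associated_mul_self {M : Type*} [CommMonoidWithZero M] [IsCancelMulZero M] {a : M}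
    (ha : a ≠ 0) (h : Associated a (a * a)) : IsUnit a := by
  obtain ⟨u, hu⟩ := h
  exact mul_left_cancel₀ ha hu ▸ u.isUnit

namespace Submonoid

variable {M : Type*} [CommMonoid M]

def IsAssociatedClosed (P : Submonoid M) : Prop :=
  ∀ ⦃a b : M⦄, Associated a b → a ∈ P → b ∈ P

theorem isAssociatedClosed_isUnit : (IsUnit.submonoid M).IsAssociatedClosed :=
  fun _ _ hab ha => hab.isUnit ha

def associatedPowers (s : M) : Submonoid M where
  carrier := {a | ∃ n : ℕ, Associated a (s ^ n)}
  one_mem' := ⟨0, by rw [pow_zero]⟩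
  mul_mem' := by
    rintro a b ⟨m, ha⟩ ⟨n, hb⟩
    exact ⟨m + n, by rw [pow_add]; exact ha.mul_mul hb⟩

theorem isAssociatedClosed_associatedPowers (s : M) :
    (associatedPowers s).IsAssociatedClosed :=
  fun _ _ hab ⟨n, h⟩ => ⟨n, hab.symm.trans h⟩

def nonMultiples {M : Type*} [CommMonoidWithZero M] {p : M} (hp : Prime p) : Submonoid M where
  carrier := {a | ¬p ∣ a}
  one_mem' := hp.not_dvd_one
  mul_mem' ha hb h := (hp.dvd_mul.mp h).elim ha hb

theorem isAssociatedClosed_nonMultiples {M : Type*} [CommMonoidWithZero M] {p : M}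
    (hp : Prime p) : (nonMultiples hp).IsAssociatedClosed :=
  fun _ _ hab ha h => ha (h.trans hab.symm.dvd)

end Submonoid

section ClassSubgroup

variable {K C M : Type*} [AddCommMonoid K] [AddCommGroup C] [CommMonoid M]

def classSubgroup (π : K →+ C) (χ : K → M) (hχ0 : IsUnit (χ 0))
    (hχadd : ∀ k k', Associated (χ (k + k')) (χ k * χ k'))
    (hχneg : ∀ k, ∃ j, π j = -π k ∧ Associated (χ j) (χ k))
    (P : Submonoid M) (hP : P.IsAssociatedClosed) : AddSubgroup C where
  carrier := {c | ∃ k, π k = c ∧ χ k ∈ P}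
  add_mem' := by
    rintro _ _ ⟨k, rfl, hk⟩ ⟨k', rfl, hk'⟩
    exact ⟨k + k', map_add π k k', hP (hχadd k k').symm (P.mul_mem hk hk')⟩
  zero_mem' := ⟨0, map_zero π, hP (associated_one_iff_isUnit.mpr hχ0).symm P.one_mem⟩
  neg_mem' := by
    rintro _ ⟨k, rfl, hk⟩
    obtain ⟨j, hj, hjk⟩ := hχneg k
    exact ⟨j, hj, hP hjk.symm hk⟩

end ClassSubgroup

section Relations

variable {K C R : Type*} [AddCommMonoid K] [AddCommGroup C] [CommRing R]
  {σ : R →+* R} {π : K →+ C} {χ : K → R}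

theorem deltaSet_subset_cprim (l : R) : DeltaSet π χ ⊆ Cprim σ π χ l := by
  rintro _ ⟨k, rfl, hk⟩
  exact ⟨k, rfl, 0, by rwa [pow_zero, associated_one_iff_isUnit]⟩

theorem deltaSet_subset_cco {l : R} (hl : ¬IsUnit l) : DeltaSet π χ ⊆ Cco π χ l := by
  rintro _ ⟨k, rfl, hk⟩
  exact ⟨k, rfl, fun h => hl (isUnit_of_dvd_unit h hk)⟩

theorem cprim_eq_of_associated {l m : R} (h : Associated (Sdual σ l) (Sdual σ m)) :
    Cprim σ π χ l = Cprim σ π χ m := by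
  ext c
  constructor
  · rintro ⟨k, hk, n, hn⟩
    exact ⟨k, hk, n, hn.trans h.pow_pow⟩
  · rintro ⟨k, hk, n, hn⟩
    exact ⟨k, hk, n, hn.trans h.pow_pow.symm⟩

theorem cco_map_eq (hσ : Function.Involutive σ) (hχσ : ∀ k, Associated (σ (χ k)) (χ k))
    (l : R) : Cco π χ (σ l) = Cco π χ l := by
  ext c
  simp only [Cco, Set.mem_ofPred_eq, map_dvd_iff_of_associated_map hσ (hχσ _)]

theorem cprim_subset_cco [IsDomain R] (hσ : Function.Involutive σ) {l μ : R} (hl : Prime l)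
    (hμ : Prime μ) (hlμ : ¬StarAssoc σ l μ) : Cprim σ π χ l ⊆ Cco π χ μ := by
  rintro _ ⟨k, rfl, n, hk⟩
  refine ⟨k, rfl, fun h => hlμ (starAssoc_of_dvd_sdual hσ hl hμ ?_)⟩
  exact hμ.dvd_of_dvd_pow (h.trans hk.dvd)

end Relations

theorem statement0_general
    {K C R : Type*} [AddCommMonoid K] [AddCommGroup C]
    [CommRing R] [IsDomain R] [UniqueFactorizationMonoid R]
    (π : K →+ C)
    (σ : R →+* R) (hσ : ∀ r, σ (σ r) = r)
    (χ : K → R) (hχ : ∀ k, χ k ≠ 0)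
    (hD1 : ∀ k, Associated (σ (χ k)) (χ k))
    (hD2 : ∀ k k', Associated (χ (k + k')) (χ k * χ k'))
    (hD3 : ∀ k, ∃ j, π j = -π k ∧ Associated (χ j) (χ k))
    (l : R) (hl : Irreducible l) :
    (∃ H : AddSubgroup C, (H : Set C) = DeltaSet π χ) ∧
    (∃ H : AddSubgroup C, (H : Set C) = Cprim σ π χ l) ∧
    (∃ H : AddSubgroup C, (H : Set C) = Cco π χ l) ∧
    DeltaSet π χ ⊆ Cprim σ π χ l ∧
    DeltaSet π χ ⊆ Cco π χ l ∧
    Cprim σ π χ l = Cprim σ π χ (σ l) ∧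
    Cco π χ l = Cco π χ (σ l) ∧
    ∀ μ : R, Irreducible μ → ¬ StarAssoc σ l μ → Cprim σ π χ l ⊆ Cco π χ μ := by
  have hχ0 : IsUnit (χ 0) := isUnit_of_associated_mul_self (hχ 0) (by simpa using hD2 0 0)
  have hlp : Prime l := hl.prime
  refine ⟨⟨classSubgroup π χ hχ0 hD2 hD3 _ Submonoid.isAssociatedClosed_isUnit, rfl⟩,
    ⟨classSubgroup π χ hχ0 hD2 hD3 _ (Submonoid.isAssociatedClosed_associatedPowers _), rfl⟩,
    ⟨classSubgroup π χ hχ0 hD2 hD3 _ (Submonoid.isAssociatedClosed_nonMultiples hlp), rfl⟩,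
    deltaSet_subset_cprim l, deltaSet_subset_cco hl.not_isUnit,
    cprim_eq_of_associated (associated_sdual_map hσ l), (cco_map_eq hσ hD1 l).symm,
    fun μ hμ hlμ => cprim_subset_cco hσ hlp hμ.prime hlμ⟩

theorem statement0
    {K C R : Type*} [AddCommMonoid K] [AddCommGroup C]
    [CommRing R] [IsDomain R] [UniqueFactorizationMonoid R]
    (π : K →+ C) (hπ : Function.Surjective π)
    (σ : R →+* R) (hσ : ∀ r, σ (σ r) = r)
    (χ : K → R) (hχ : ∀ k, χ k ≠ 0)
    (hD1 : ∀ k, Associated (σ (χ k)) (χ k))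
    (hD2 : ∀ k k', Associated (χ (k + k')) (χ k * χ k'))
    (hD3 : ∀ k, ∃ j, π j = -π k ∧ Associated (χ j) (χ k))
    (l : R) (hl : Irreducible l) :
    (∃ H : AddSubgroup C, (H : Set C) = DeltaSet π χ) ∧
    (∃ H : AddSubgroup C, (H : Set C) = Cprim σ π χ l) ∧
    (∃ H : AddSubgroup C, (H : Set C) = Cco π χ l) ∧
    DeltaSet π χ ⊆ Cprim σ π χ l ∧
    DeltaSet π χ ⊆ Cco π χ l ∧
    Cprim σ π χ l = Cprim σ π χ (σ l) ∧
    Cco π χ l = Cco π χ (σ l) ∧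
    ∀ μ : R, Irreducible μ → ¬ StarAssoc σ l μ → Cprim σ π χ l ⊆ Cco π χ μ :=
  statement0_general π σ hσ χ hχ hD1 hD2 hD3 l hl
end

section
/- Suppose Φ_R is injective, i.e., every c ∈ C lying in C^λ for every irreducible λ of R lies in Δ. Then the following splitting property holds: if k, j ∈ K are such that Δ_k and Δ_j have no common irreducible factor (are relatively prime in R) and π(k) + π(j) ∈ Δ, then π(k) ∈ Δ and π(j) ∈ Δ. -/
/-!
If `Δ_m` is a unit and `π m = π k + π j`, then for `j'` as in (Δ3) with `π j' = -π j`, the element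
`m + j'` represents `π k` and `Δ_{m+j'}` is an associate of `Δ_j`. Since `Δ_k` and `Δ_j` share no
irreducible factor, every irreducible `λ` misses one of the two representatives `k`, `m + j'` of
`π k`, so `π k ∈ C^λ` for all `λ`, and injectivity of `Φ_R` gives `π k ∈ Δ`; symmetrically for `π j`.
-/

section

variable {K C R : Type*} [AddCommMonoid K] [AddCommGroup C] [CommRing R]
  {π : K →+ C} {χ : K → R}

theorem exists_associated_of_add_mem_deltaSet
    (hD2 : ∀ k k', Associated (χ (k + k')) (χ k * χ k'))
    (hD3 : ∀ k, ∃ j, π j = -π k ∧ Associated (χ j) (χ k))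
    {k j : K} (hsum : π k + π j ∈ DeltaSet π χ) :
    ∃ i, π i = π k ∧ Associated (χ i) (χ j) := by
  obtain ⟨m, hm, hunit⟩ := hsum
  obtain ⟨j', hj', hassoc⟩ := hD3 j
  exact ⟨m + j', by rw [map_add, hm, hj']; abel,
    (hD2 m j').trans ((associated_unit_mul_left _ _ hunit).trans hassoc)⟩

theorem mem_cco_of_eq_of_coprime {k i : K} (hi : π i = π k)
    (hcop : ∀ p : R, Irreducible p → p ∣ χ k → ¬ p ∣ χ i)
    {l : R} (hl : Irreducible l) : π k ∈ Cco π χ l := by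
  by_cases hlk : l ∣ χ k
  · exact ⟨i, hi, hcop l hl hlk⟩
  · exact ⟨k, rfl, hlk⟩

theorem mem_deltaSet_of_add_mem_deltaSet_of_coprime
    (hD2 : ∀ k k', Associated (χ (k + k')) (χ k * χ k'))
    (hD3 : ∀ k, ∃ j, π j = -π k ∧ Associated (χ j) (χ k))
    (hR : ∀ c : C, (∀ l : R, Irreducible l → c ∈ Cco π χ l) → c ∈ DeltaSet π χ)
    {k j : K} (hcop : ∀ p : R, Irreducible p → p ∣ χ k → ¬ p ∣ χ j)
    (hsum : π k + π j ∈ DeltaSet π χ) :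
    π k ∈ DeltaSet π χ := by
  obtain ⟨i, hi, hij⟩ := exists_associated_of_add_mem_deltaSet hD2 hD3 hsum
  exact hR _ fun l hl => mem_cco_of_eq_of_coprime hi
    (fun p hp hpk hpi => hcop p hp hpk (hij.dvd_iff_dvd_right.mp hpi)) hl

end

theorem statement2_general
    {K C R : Type*} [AddCommMonoid K] [AddCommGroup C]
    [CommRing R]
    (π : K →+ C)
    (χ : K → R)
    (hD2 : ∀ k k', Associated (χ (k + k')) (χ k * χ k'))
    (hD3 : ∀ k, ∃ j, π j = -π k ∧ Associated (χ j) (χ k))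
    (hR : ∀ c : C, (∀ l : R, Irreducible l → c ∈ Cco π χ l) → c ∈ DeltaSet π χ)
    (k j : K)
    (hcop : ∀ p : R, Irreducible p → p ∣ χ k → ¬ p ∣ χ j)
    (hsum : π k + π j ∈ DeltaSet π χ) :
    π k ∈ DeltaSet π χ ∧ π j ∈ DeltaSet π χ :=
  ⟨mem_deltaSet_of_add_mem_deltaSet_of_coprime hD2 hD3 hR hcop hsum,
    mem_deltaSet_of_add_mem_deltaSet_of_coprime hD2 hD3 hR
      (fun p hp hpj hpk => hcop p hp hpk hpj) (by rwa [add_comm])⟩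

/-- If `Φ_R` is injective, then the splitting property holds: if `Δ_k` and `Δ_j` are
relatively prime and `π k + π j ∈ Δ`, then `π k ∈ Δ` and `π j ∈ Δ`. -/
theorem statement2
    {K C R : Type*} [AddCommMonoid K] [AddCommGroup C]
    [CommRing R] [IsDomain R] [UniqueFactorizationMonoid R]
    (π : K →+ C) (hπ : Function.Surjective π)
    (σ : R →+* R) (hσ : ∀ r, σ (σ r) = r)
    (χ : K → R) (hχ : ∀ k, χ k ≠ 0)
    (hD1 : ∀ k, Associated (σ (χ k)) (χ k))
    (hD2 : ∀ k k', Associated (χ (k + k')) (χ k * χ k'))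
    (hD3 : ∀ k, ∃ j, π j = -π k ∧ Associated (χ j) (χ k))
    (hR : ∀ c : C, (∀ l : R, Irreducible l → c ∈ Cco π χ l) → c ∈ DeltaSet π χ)
    (k j : K)
    (hcop : ∀ p : R, Irreducible p → p ∣ χ k → ¬ p ∣ χ j)
    (hsum : π k + π j ∈ DeltaSet π χ) :
    π k ∈ DeltaSet π χ ∧ π j ∈ DeltaSet π χ :=
  statement2_general π χ hD2 hD3 hR k j hcop hsum
end

section
/- Suppose every c ∈ C lying in C^λ for every irreducible λ of R lies in Δ (injectivity of Φ_R). Then Φ_L is injective: whenever λ_1, …, λ_n are irreducibles of R that are pairwise non-*-associate, c_i ∈ C_{λ_i} for each i, and c_1 + … + c_n ∈ Δ, it follows that c_i ∈ Δ for every i. -/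
/-! Fix `i` and an irreducible `λ`; by injectivity of `Φ_R` it suffices to represent `c_i` by
some `k` with `λ ∤ Δ_k`. If `λ` is not a `*`-associate of `λ_i`, the primary representative of
`c_i` works, since the only primes dividing a power of `S(λ_i)` are `*`-associates of `λ_i`.
Otherwise `λ` is a `*`-associate of no other `λ_j`, and
`c_i = (c_1 + ⋯ + c_n) - ∑_{j ≠ i} c_j` is represented by `k_0 + ∑_{j ≠ i} k_j'`, where
`Δ_{k_0}` is a unit and `k_j'` is the witness of `(Δ3)` for the primary representative of `c_j`:
up to a unit, its `Δ`-value is a product of factors that the prime `λ` does not divide. -/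

section StarAssoc

variable {R : Type*} [CommRing R] {σ : R →+* R}

theorem StarAssoc.symm (hσ : ∀ r, σ (σ r) = r) {l m : R} (h : StarAssoc σ l m) :
    StarAssoc σ m l := by
  rcases h with h | h
  · exact Or.inl h.symm
  · exact Or.inr (by simpa only [hσ] using (h.map σ).symm)

theorem StarAssoc.trans (hσ : ∀ r, σ (σ r) = r) {l m p : R} (hlm : StarAssoc σ l m)
    (hmp : StarAssoc σ m p) : StarAssoc σ l p := by
  rcases hlm with hlm | hlm <;> rcases hmp with hmp | hmp
  · exact Or.inl (hlm.trans hmp)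
  · exact Or.inr (hlm.trans hmp)
  · exact Or.inr (hlm.trans (hmp.map σ))
  · exact Or.inl (hlm.trans (by simpa only [hσ] using hmp.map σ))

theorem starAssoc_of_dvd_sdual_pow [IsDomain R] [UniqueFactorizationMonoid R]
    (hσ : ∀ r, σ (σ r) = r) {l m : R} (hl : Irreducible l) (hm : Irreducible m) {n : ℕ}
    (h : l ∣ Sdual σ m ^ n) : StarAssoc σ l m := by
  have hp : Prime l := UniqueFactorizationMonoid.irreducible_iff_prime.mp hl
  have hσm : Irreducible (σ m) :=
    hm.map (RingEquiv.ofBijective σ (Function.Involutive.bijective hσ))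
  replace h := hp.dvd_of_dvd_pow h
  unfold Sdual at h
  split_ifs at h
  · exact Or.inl (hl.associated_of_dvd hm h)
  · rcases hp.dvd_mul.mp h with h | h
    · exact Or.inl (hl.associated_of_dvd hm h)
    · exact Or.inr (hl.associated_of_dvd hσm h)

end StarAssoc

section MultiplicativeUpToUnits

variable {K M : Type*} [AddCommMonoid K]

theorem isUnit_apply_zero_of_associated_apply_add [CommMonoidWithZero M] [IsCancelMulZero M]
    {χ : K → M} (h0 : χ 0 ≠ 0) (hadd : ∀ k k', Associated (χ (k + k')) (χ k * χ k')) :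
    IsUnit (χ 0) := by
  have h : Associated (χ 0 * 1) (χ 0 * χ 0) := by
    simpa only [add_zero, mul_one] using hadd 0 0
  exact associated_one_iff_isUnit.mp (h.of_mul_left (Associated.refl _) h0).symm

theorem associated_apply_sum_prod [CommMonoid M] {ι : Type*} {χ : K → M} (h0 : IsUnit (χ 0))
    (hadd : ∀ k k', Associated (χ (k + k')) (χ k * χ k')) (s : Finset ι) (f : ι → K) :
    Associated (χ (∑ j ∈ s, f j)) (∏ j ∈ s, χ (f j)) := by
  classical
  induction s using Finset.induction_on with
  | empty =>
    simpa only [Finset.sum_empty, Finset.prod_empty] using associated_one_iff_isUnit.mpr h0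
  | insert a s ha ih =>
    rw [Finset.sum_insert ha, Finset.prod_insert ha]
    exact (hadd _ _).trans (ih.mul_left _)

theorem Prime.not_dvd_apply_sum [CommMonoidWithZero M] {ι : Type*} {χ : K → M} {p : M}
    (hp : Prime p) (h0 : IsUnit (χ 0)) (hadd : ∀ k k', Associated (χ (k + k')) (χ k * χ k'))
    {s : Finset ι} {f : ι → K} (hf : ∀ j ∈ s, ¬ p ∣ χ (f j)) : ¬ p ∣ χ (∑ j ∈ s, f j) := by
  rw [(associated_apply_sum_prod h0 hadd s f).dvd_iff_dvd_right]
  exact hp.not_dvd_finsetProd hf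

end MultiplicativeUpToUnits

theorem statement3_general
    {K C R : Type*} [AddCommMonoid K] [AddCommGroup C]
    [CommRing R] [IsDomain R] [UniqueFactorizationMonoid R]
    (π : K →+ C)
    (σ : R →+* R) (hσ : ∀ r, σ (σ r) = r)
    (χ : K → R) (hχ : ∀ k, χ k ≠ 0)
    (hD2 : ∀ k k', Associated (χ (k + k')) (χ k * χ k'))
    (hD3 : ∀ k, ∃ j, π j = -π k ∧ Associated (χ j) (χ k))
    (hR : ∀ c : C, (∀ l : R, Irreducible l → c ∈ Cco π χ l) → c ∈ DeltaSet π χ) :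
    ∀ (n : ℕ) (lam : Fin n → R) (cs : Fin n → C),
      (∀ i, Irreducible (lam i)) →
      (∀ i j, i ≠ j → ¬ StarAssoc σ (lam i) (lam j)) →
      (∀ i, cs i ∈ Cprim σ π χ (lam i)) →
      (∑ i, cs i) ∈ DeltaSet π χ →
      ∀ i, cs i ∈ DeltaSet π χ := by
  intro n lam cs hirr hpair hprim ⟨k₀, hk₀, hk₀_unit⟩ i
  choose k hk e hke using hprim
  choose k' hk' hk'_assoc using fun j => hD3 (k j)
  have not_dvd : ∀ j l, Irreducible l → ¬ StarAssoc σ l (lam j) → ¬ l ∣ χ (k j) :=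
    fun j l hl hlj hdvd =>
      hlj (starAssoc_of_dvd_sdual_pow hσ hl (hirr j) ((hke j).dvd_iff_dvd_right.mp hdvd))
  refine hR _ fun l hl => ?_
  by_cases hli : StarAssoc σ l (lam i)
  · refine ⟨k₀ + ∑ j ∈ Finset.univ.erase i, k' j, ?_, ?_⟩
    · simp only [map_add, map_sum, hk', hk, hk₀, Finset.sum_neg_distrib,
        ← Finset.add_sum_erase Finset.univ cs (Finset.mem_univ i)]
      abel
    have hp : Prime l := UniqueFactorizationMonoid.irreducible_iff_prime.mp hl
    rw [(hD2 _ _).dvd_iff_dvd_right]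
    refine hp.not_dvd_mul (fun h => hl.not_isUnit (isUnit_of_dvd_unit h hk₀_unit))
      (hp.not_dvd_apply_sum (isUnit_apply_zero_of_associated_apply_add (hχ 0) hD2) hD2
        fun j hj => ?_)
    rw [(hk'_assoc j).dvd_iff_dvd_right]
    exact not_dvd j l hl fun hlj =>
      hpair i j (Finset.ne_of_mem_erase hj).symm ((hli.symm hσ).trans hσ hlj)
  · exact ⟨k i, hk i, not_dvd i l hl hli⟩

/-- If `Φ_R` is injective, then `Φ_L` is injective: a sum of primary classes along
pairwise non-`*`-associate irreducibles lying in `Δ` has all its summands in `Δ`. -/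
theorem statement3
    {K C R : Type*} [AddCommMonoid K] [AddCommGroup C]
    [CommRing R] [IsDomain R] [UniqueFactorizationMonoid R]
    (π : K →+ C) (hπ : Function.Surjective π)
    (σ : R →+* R) (hσ : ∀ r, σ (σ r) = r)
    (χ : K → R) (hχ : ∀ k, χ k ≠ 0)
    (hD1 : ∀ k, Associated (σ (χ k)) (χ k))
    (hD2 : ∀ k k', Associated (χ (k + k')) (χ k * χ k'))
    (hD3 : ∀ k, ∃ j, π j = -π k ∧ Associated (χ j) (χ k))
    (hR : ∀ c : C, (∀ l : R, Irreducible l → c ∈ Cco π χ l) → c ∈ DeltaSet π χ) :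
    ∀ (n : ℕ) (lam : Fin n → R) (cs : Fin n → C),
      (∀ i, Irreducible (lam i)) →
      (∀ i j, i ≠ j → ¬ StarAssoc σ (lam i) (lam j)) →
      (∀ i, cs i ∈ Cprim σ π χ (lam i)) →
      (∑ i, cs i) ∈ DeltaSet π χ →
      ∀ i, cs i ∈ DeltaSet π χ :=
  statement3_general π σ hσ χ hχ hD2 hD3 hR
end

section
/- Let A be a subgroup of C and q : C → G := C/A the quotient map. If A is left primary decomposable (with respect to Δ(A) = Δ ∩ A and A_λ = C_λ ∩ A) and G is left primary decomposable (with respect to Δ(G) = q(Δ) and G_λ = q(C_λ)), then C is left primary decomposable (with respect to Δ and C_λ). -/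
/-- Left primary decomposability of a subgroup with carrier `S` of an abelian group `G`,
with respect to a designated subset `D` ("`Δ`") and primary parts `P λ`:
every element of `S` is `D` plus a finite sum of primary elements, and a sum of
primary elements along pairwise non-`*`-associate irreducibles lying in `D` has all
summands in `D`. -/
def LeftPD {R G : Type*} [CommRing R] [AddCommGroup G] (σ : R →+* R)
    (S D : Set G) (P : R → Set G) : Prop :=
  (∀ g ∈ S, ∃ d ∈ D, ∃ n : ℕ, ∃ lam : Fin n → R, ∃ cs : Fin n → G,
    (∀ i, Irreducible (lam i)) ∧ (∀ i, cs i ∈ P (lam i)) ∧ g = d + ∑ i, cs i) ∧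
  (∀ (n : ℕ) (lam : Fin n → R) (cs : Fin n → G),
    (∀ i, Irreducible (lam i)) →
    (∀ i j, i ≠ j → ¬ StarAssoc σ (lam i) (lam j)) →
    (∀ i, cs i ∈ P (lam i)) →
    (∑ i, cs i) ∈ D → ∀ i, cs i ∈ D)

/-! `Δ` is a subgroup of `C` (products of units are units, and `(Δ3)` supplies negatives),
and each `C_λ` is stable under translation by `Δ`. For a decomposition of `g ∈ C`, decompose
`g` modulo `A` in `G`, lift, and decompose the remainder, which lies in `A`. For purity, if
`∑ cᵢ ∈ Δ` with `cᵢ ∈ C_λᵢ`, purity in `G` gives `dᵢ ∈ Δ` with `cᵢ ≡ dᵢ (mod A)`; then the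
`cᵢ - dᵢ ∈ C_λᵢ ∩ A` sum into `Δ ∩ A`, so purity in `A` puts each `cᵢ - dᵢ`, hence `cᵢ`, in `Δ`. -/

namespace LeftPD

variable {R C : Type*} [CommRing R] [AddCommGroup C] {σ : R →+* R}
  {D : AddSubgroup C} {P : R → Set C} {A : AddSubgroup C}

theorem exists_decomposition_of_quotient
    (hA : LeftPD σ (A : Set C) (D ∩ A) (fun l => P l ∩ A))
    (hG : LeftPD σ (Set.univ : Set (C ⧸ A)) (QuotientAddGroup.mk' A '' D)
      (fun l => QuotientAddGroup.mk' A '' P l))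
    (g : C) :
    ∃ d ∈ (D : Set C), ∃ n : ℕ, ∃ lam : Fin n → R, ∃ cs : Fin n → C,
      (∀ i, Irreducible (lam i)) ∧ (∀ i, cs i ∈ P (lam i)) ∧ g = d + ∑ i, cs i := by
  obtain ⟨_, ⟨d, hd, rfl⟩, n, lam, qcs, hlam, hqcs, hg⟩ := hG.1 (g : C ⧸ A) trivial
  choose cs hcs hcsq using hqcs
  have hrest : g - (d + ∑ i, cs i) ∈ A := by
    rw [← QuotientAddGroup.eq_zero_iff, QuotientAddGroup.mk_sub, QuotientAddGroup.mk_add,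
      QuotientAddGroup.mk_sum]
    simpa only [← hcsq, QuotientAddGroup.mk'_apply] using sub_eq_zero.mpr hg
  obtain ⟨d', hd', m, mu, cs', hmu, hcs', hrest_eq⟩ := hA.1 _ hrest
  refine ⟨d + d', D.add_mem hd hd'.1, n + m, Fin.append lam mu, Fin.append cs cs', ?_, ?_, ?_⟩
  · simpa [Fin.forall_fin_add, Fin.append_left, Fin.append_right] using ⟨hlam, hmu⟩
  · simpa [Fin.forall_fin_add, Fin.append_left, Fin.append_right] using
      ⟨hcs, fun j => (hcs' j).1⟩
  · rw [Fin.sum_univ_add]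
    simp only [Fin.append_left, Fin.append_right]
    rw [sub_eq_iff_eq_add.mp hrest_eq]
    abel

theorem mem_of_sum_mem_of_quotient
    (hP : ∀ l, ∀ c ∈ P l, ∀ d ∈ D, c + d ∈ P l)
    (hA : LeftPD σ (A : Set C) (D ∩ A) (fun l => P l ∩ A))
    (hG : LeftPD σ (Set.univ : Set (C ⧸ A)) (QuotientAddGroup.mk' A '' D)
      (fun l => QuotientAddGroup.mk' A '' P l))
    (n : ℕ) (lam : Fin n → R) (cs : Fin n → C)
    (hlam : ∀ i, Irreducible (lam i)) (hdistinct : ∀ i j, i ≠ j → ¬ StarAssoc σ (lam i) (lam j))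
    (hcs : ∀ i, cs i ∈ P (lam i)) (hsum : ∑ i, cs i ∈ D) (i : Fin n) :
    cs i ∈ D := by
  have hq : ∀ i, ∃ d ∈ (D : Set C), QuotientAddGroup.mk' A d = cs i :=
    hG.2 n lam (fun i => (cs i : C ⧸ A)) hlam hdistinct (fun i => ⟨cs i, hcs i, rfl⟩)
      ⟨_, hsum, by simp⟩
  choose d hd hdq using hq
  simp only [QuotientAddGroup.mk'_apply] at hdq
  have hdiffA : ∀ i, cs i - d i ∈ A := fun i => by
    rw [← QuotientAddGroup.eq_zero_iff, QuotientAddGroup.mk_sub, hdq i, sub_self]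
  have hdiffP : ∀ i, cs i - d i ∈ P (lam i) := fun i => by
    simpa only [sub_eq_add_neg] using hP _ _ (hcs i) _ (D.neg_mem (hd i))
  have hdiff_sum : ∑ i, (cs i - d i) ∈ D := by
    rw [Finset.sum_sub_distrib]
    exact D.sub_mem hsum (D.sum_mem fun i _ => hd i)
  have hdiffD := hA.2 n lam (fun i => cs i - d i) hlam hdistinct
    (fun i => ⟨hdiffP i, hdiffA i⟩) ⟨hdiff_sum, A.sum_mem fun i _ => hdiffA i⟩
  simpa using D.add_mem (hd i) (hdiffD i).1

theorem of_addSubgroup_of_quotient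
    (hP : ∀ l, ∀ c ∈ P l, ∀ d ∈ D, c + d ∈ P l)
    (hA : LeftPD σ (A : Set C) (D ∩ A) (fun l => P l ∩ A))
    (hG : LeftPD σ (Set.univ : Set (C ⧸ A)) (QuotientAddGroup.mk' A '' D)
      (fun l => QuotientAddGroup.mk' A '' P l)) :
    LeftPD σ (Set.univ : Set C) D P :=
  ⟨fun g _ => exists_decomposition_of_quotient hA hG g,
    mem_of_sum_mem_of_quotient hP hA hG⟩

end LeftPD

section DeltaSet

variable {K C R : Type*} [AddCommMonoid K] [AddCommGroup C] [CommRing R]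
  {π : K →+ C} {χ : K → R}

theorem isUnit_apply_zero_of_associated_add [IsDomain R] (hχ : ∀ k, χ k ≠ 0)
    (hD2 : ∀ k k', Associated (χ (k + k')) (χ k * χ k')) : IsUnit (χ 0) := by
  obtain ⟨u, hu⟩ := hD2 0 0
  rw [add_zero] at hu
  exact mul_left_cancel₀ (hχ 0) hu ▸ u.isUnit

def deltaAddSubgroup [IsDomain R] (hχ : ∀ k, χ k ≠ 0)
    (hD2 : ∀ k k', Associated (χ (k + k')) (χ k * χ k'))
    (hD3 : ∀ k, ∃ j, π j = -π k ∧ Associated (χ j) (χ k)) : AddSubgroup C where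
  carrier := DeltaSet π χ
  zero_mem' := ⟨0, map_zero π, isUnit_apply_zero_of_associated_add hχ hD2⟩
  add_mem' := by
    rintro _ _ ⟨k, rfl, hk⟩ ⟨k', rfl, hk'⟩
    exact ⟨k + k', map_add π k k', (hD2 k k').symm.isUnit (hk.mul hk')⟩
  neg_mem' := by
    rintro _ ⟨k, rfl, hk⟩
    obtain ⟨j, hj, hjk⟩ := hD3 k
    exact ⟨j, hj, hjk.symm.isUnit hk⟩

theorem Cprim_add_mem_of_mem_DeltaSet {σ : R →+* R}
    (hD2 : ∀ k k', Associated (χ (k + k')) (χ k * χ k')) {l : R} {c d : C}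
    (hc : c ∈ Cprim σ π χ l) (hd : d ∈ DeltaSet π χ) : c + d ∈ Cprim σ π χ l := by
  obtain ⟨k, rfl, n, hk⟩ := hc
  obtain ⟨k', rfl, hk'⟩ := hd
  refine ⟨k + k', map_add π k k', n, (hD2 k k').trans ?_⟩
  simpa using hk.mul_mul (associated_one_iff_isUnit.mpr hk')

end DeltaSet

theorem statement5_general
    {K C R : Type*} [AddCommMonoid K] [AddCommGroup C]
    [CommRing R] [IsDomain R]
    (π : K →+ C)
    (σ : R →+* R)
    (χ : K → R) (hχ : ∀ k, χ k ≠ 0)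
    (hD2 : ∀ k k', Associated (χ (k + k')) (χ k * χ k'))
    (hD3 : ∀ k, ∃ j, π j = -π k ∧ Associated (χ j) (χ k))
    (A : AddSubgroup C)
    (hA : LeftPD σ (A : Set C) (DeltaSet π χ ∩ A) (fun l => Cprim σ π χ l ∩ A))
    (hG : LeftPD σ (Set.univ : Set (C ⧸ A))
      ((QuotientAddGroup.mk' A) '' DeltaSet π χ)
      (fun l => (QuotientAddGroup.mk' A) '' Cprim σ π χ l)) :
    LeftPD σ (Set.univ : Set C) (DeltaSet π χ) (Cprim σ π χ) :=
  LeftPD.of_addSubgroup_of_quotient (D := deltaAddSubgroup hχ hD2 hD3)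
    (fun _ _ hc _ hd => Cprim_add_mem_of_mem_DeltaSet hD2 hc hd) hA hG

/-- If a subgroup `A ≤ C` and the quotient `G = C ⧸ A` are left primary decomposable,
then so is `C`. -/
theorem statement5
    {K C R : Type*} [AddCommMonoid K] [AddCommGroup C]
    [CommRing R] [IsDomain R] [UniqueFactorizationMonoid R]
    (π : K →+ C) (hπ : Function.Surjective π)
    (σ : R →+* R) (hσ : ∀ r, σ (σ r) = r)
    (χ : K → R) (hχ : ∀ k, χ k ≠ 0)
    (hD1 : ∀ k, Associated (σ (χ k)) (χ k))
    (hD2 : ∀ k k', Associated (χ (k + k')) (χ k * χ k'))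
    (hD3 : ∀ k, ∃ j, π j = -π k ∧ Associated (χ j) (χ k))
    (A : AddSubgroup C)
    (hA : LeftPD σ (A : Set C) (DeltaSet π χ ∩ A) (fun l => Cprim σ π χ l ∩ A))
    (hG : LeftPD σ (Set.univ : Set (C ⧸ A))
      ((QuotientAddGroup.mk' A) '' DeltaSet π χ)
      (fun l => (QuotientAddGroup.mk' A) '' Cprim σ π χ l)) :
    LeftPD σ (Set.univ : Set C) (DeltaSet π χ) (Cprim σ π χ) :=
  statement5_general π σ χ hχ hD2 hD3 A hA hG
end

section
/- Let m ≥ 1 be an integer, let a be a nonzero integer, and let r be a prime number such that r ≥ q for every prime q dividing a. Then gcd(a, (m+1)^r − m^r) = 1. -/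
/-!
Let `p` be a prime dividing both `a` and `(m+1)^r - m^r`. In `ZMod p` we get `(x+1)^r = x^r`
with `x ≠ 0`, so `(x+1)/x` is an `r`-th root of unity different from `1`: its order is the prime
`r`, which must divide `p - 1`. Hence `r < p`, contradicting `p ≤ r`.
-/

lemma orderOf_div_eq_prime_of_pow_eq_pow {K : Type*} [Field K] {x y : K} {r : ℕ}
    (hr : r.Prime) (hy : y ≠ 0) (hxy : x ≠ y) (h : x ^ r = y ^ r) : orderOf (x / y) = r :=
  haveI := Fact.mk hr
  orderOf_eq_prime (by rw [div_pow, h, div_self (pow_ne_zero r hy)])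
    (by rwa [Ne, div_eq_one_iff_eq hy])

lemma FiniteField.prime_dvd_card_sub_one_of_add_one_pow_eq_pow {K : Type*} [Field K] [Fintype K]
    {x : K} {r : ℕ} (hr : r.Prime) (h : (x + 1) ^ r = x ^ r) : r ∣ Fintype.card K - 1 := by
  have hx : x ≠ 0 := by
    rintro rfl
    simp [zero_pow hr.ne_zero] at h
  have hx1 : x + 1 ≠ 0 := fun h0 => hx <| pow_eq_zero_iff hr.ne_zero |>.mp (by
    rw [← h, h0, zero_pow hr.ne_zero])
  rw [← orderOf_div_eq_prime_of_pow_eq_pow hr hx (by simp) h]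
  exact orderOf_dvd_of_pow_eq_one <| pow_card_sub_one_eq_one _ (div_ne_zero hx1 hx)

lemma Int.lt_of_prime_dvd_add_one_pow_sub_pow {p r : ℕ} (hp : p.Prime) (hr : r.Prime) (m : ℤ)
    (hdvd : (p : ℤ) ∣ (m + 1) ^ r - m ^ r) : r < p := by
  have := Fact.mk hp
  have hzmod : ((m : ZMod p) + 1) ^ r = (m : ZMod p) ^ r := by
    rw [← sub_eq_zero]
    exact_mod_cast (ZMod.intCast_zmod_eq_zero_iff_dvd _ p).mpr hdvd
  have hrp : r ∣ p - 1 := ZMod.card p ▸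
    FiniteField.prime_dvd_card_sub_one_of_add_one_pow_eq_pow hr hzmod
  exact (Nat.le_of_dvd (Nat.sub_pos_of_lt hp.one_lt) hrp).trans_lt (Nat.sub_lt hp.pos one_pos)

theorem statement13_general (m : ℤ) (a : ℤ) (r : ℕ)
    (hr : Nat.Prime r)
    (hge : ∀ q : ℕ, Nat.Prime q → (q : ℤ) ∣ a → q ≤ r) :
    Int.gcd a ((m + 1) ^ r - m ^ r) = 1 := by
  by_contra hg
  obtain ⟨p, hp, hpg⟩ := Nat.exists_prime_and_dvd hg
  have hpg : (p : ℤ) ∣ (Int.gcd a ((m + 1) ^ r - m ^ r) : ℤ) := Int.natCast_dvd_natCast.mpr hpg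
  have hpa : (p : ℤ) ∣ a := hpg.trans (Int.gcd_dvd_left _ _)
  have hpN : (p : ℤ) ∣ (m + 1) ^ r - m ^ r := hpg.trans (Int.gcd_dvd_right _ _)
  exact (hge p hp hpa).not_gt (Int.lt_of_prime_dvd_add_one_pow_sub_pow hp hr m hpN)

/-- If `r` is a prime not smaller than any prime factor of the nonzero integer `a`,
then `a` and `(m+1)^r - m^r` are relatively prime. -/
theorem statement13 (m : ℤ) (hm : 1 ≤ m) (a : ℤ) (ha : a ≠ 0) (r : ℕ)
    (hr : Nat.Prime r)
    (hge : ∀ q : ℕ, Nat.Prime q → (q : ℤ) ∣ a → q ≤ r) :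
    Int.gcd a ((m + 1) ^ r - m ^ r) = 1 :=
  statement13_general m a r hr hge
end

section
/- Let m ≥ 1 and r ≥ 1 be integers. The quotient ring ℤ[t]/I, where I is the ideal of the polynomial ring ℤ[t] generated by (m+1)·t − m and t^r − 1, is isomorphic as a ring (in particular, as an abelian group it is cyclic) to ℤ/((m+1)^r − m^r). -/
/-! In `ℤ[t]/I` the integer `N = (m+1)^r - m^r` vanishes, because `((m+1)t)^r - m^r` is a multiple
of `(m+1)t - m` and `t^r ≡ 1`. Since `m+1` is invertible modulo `N`, the first generator then forces
`t ≡ m(m+1)⁻¹`, so `ℤ → ℤ[t]/I` is onto with `N` in its kernel. Conversely, evaluation at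
`m(m+1)⁻¹ ∈ ℤ/N` kills both generators (there `(m+1)^r = m^r`), so the kernel is exactly `Nℤ`. -/

open Polynomial

theorem Polynomial.C_pow_sub_pow_mem_span {R : Type*} [CommRing R] (a b : R) (r : ℕ) :
    C (a ^ r - b ^ r) ∈ Ideal.span {C a * X - C b, X ^ r - 1} := by
  obtain ⟨q, hq⟩ := sub_dvd_pow_sub_pow (C a * X) (C b) r
  refine Ideal.mem_span_pair.mpr ⟨q, -C (a ^ r), ?_⟩
  simp only [map_sub, map_pow]
  linear_combination -hq

theorem IsCoprime.pow_sub_pow_right {R : Type*} [CommRing R] {a b : R} (h : IsCoprime a b)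
    {r : ℕ} (hr : 0 < r) : IsCoprime a (a ^ r - b ^ r) := by
  obtain ⟨k, rfl⟩ := Nat.exists_eq_add_of_lt hr
  convert (h.pow_right (n := k + 1)).neg_right.add_mul_left_right (a ^ k) using 1
  ring

theorem Polynomial.X_sub_C_mem_of_C_mul_X_sub_C_mem {R : Type*} [CommRing R] {I : Ideal R[X]}
    {a b n u v : R} (hab : C a * X - C b ∈ I) (hn : C n ∈ I) (huv : u * a + v * n = 1) :
    X - C (b * u) ∈ I := by
  have key : X - C (b * u) = C u * (C a * X - C b) + C v * X * C n := by
    have hC := congrArg C huv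
    simp only [map_add, map_mul, map_one] at hC
    simp only [map_mul]
    linear_combination -X * hC
  rw [key]
  exact I.add_mem (I.mul_mem_left _ hab) (I.mul_mem_left _ hn)

theorem Ideal.Quotient.mk_comp_C_surjective_of_X_sub_C_mem {R : Type*} [CommRing R]
    {I : Ideal R[X]} {c : R} (hc : X - C c ∈ I) :
    Function.Surjective ((Ideal.Quotient.mk I).comp C) := by
  intro q
  obtain ⟨p, rfl⟩ := Ideal.Quotient.mk_surjective q
  refine ⟨p.eval c, (Ideal.Quotient.eq.mpr ?_).symm⟩
  exact I.mem_of_dvd X_sub_C_dvd_sub_C_eval hc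

theorem ZMod.nonempty_ringEquiv_of_intCast_surjective {Q : Type*} [Ring Q] (n : ℕ)
    (hn : (n : Q) = 0) (hsurj : Function.Surjective (Int.cast : ℤ → Q)) (φ : Q →+* ZMod n) :
    Nonempty (Q ≃+* ZMod n) := by
  have : CharP Q n := ⟨fun x => ⟨fun hx => by
      simpa [ZMod.natCast_eq_zero_iff] using congrArg φ hx,
    fun ⟨k, hk⟩ => by rw [hk, Nat.cast_mul, hn, zero_mul]⟩⟩
  let ψ := ZMod.castHom (dvd_refl n) Q
  refine ⟨RingEquiv.ofRingHom φ ψ (RingHom.ext_zmod _ _) (RingHom.ext fun q => ?_)⟩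
  obtain ⟨z, rfl⟩ := hsurj q
  simp [ψ]

theorem Polynomial.nonempty_quotient_span_C_mul_X_sub_C_X_pow_sub_one_ringEquiv_zmod
    {a b : ℤ} (hab : IsCoprime a b) {r : ℕ} (hr : 0 < r) {n : ℕ} (hn : (n : ℤ) = a ^ r - b ^ r) :
    Nonempty ((ℤ[X] ⧸ Ideal.span {C a * X - C b, X ^ r - 1}) ≃+* ZMod n) := by
  set I : Ideal ℤ[X] := Ideal.span {C a * X - C b, X ^ r - 1}
  have hnI : C (n : ℤ) ∈ I := hn ▸ C_pow_sub_pow_mem_span a b r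
  obtain ⟨u, v, huv⟩ := hn ▸ hab.pow_sub_pow_right hr
  have hX : X - C (b * u) ∈ I :=
    X_sub_C_mem_of_C_mul_X_sub_C_mem (Ideal.subset_span (by simp)) hnI huv
  have hsurj : Function.Surjective (Int.cast : ℤ → ℤ[X] ⧸ I) := by
    have := Ideal.Quotient.mk_comp_C_surjective_of_X_sub_C_mem hX
    rwa [RingHom.eq_intCast' ((Ideal.Quotient.mk I).comp C), Int.coe_castRingHom] at this
  have hn0 : ((n : ℤ) : ℤ[X] ⧸ I) = 0 := by
    rw [← map_intCast (Ideal.Quotient.mk I), ← C_eq_intCast, Ideal.Quotient.eq_zero_iff_mem]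
    exact hnI
  have hau : (a : ZMod n) * u = 1 := by
    simpa [mul_comm] using congrArg (Int.cast : ℤ → ZMod n) huv
  have hpow : (a : ZMod n) ^ r = (b : ZMod n) ^ r := by
    have := congrArg (Int.cast : ℤ → ZMod n) hn
    push_cast [ZMod.natCast_self] at this
    linear_combination -this
  have hker :
      I ≤ RingHom.ker (eval₂RingHom (Int.castRingHom (ZMod n)) ((b * u : ℤ) : ZMod n)) := by
    rw [Ideal.span_le, Set.insert_subset_iff, Set.singleton_subset_iff]
    constructor
    · simp only [SetLike.mem_coe, RingHom.mem_ker, coe_eval₂RingHom, eval₂_sub, eval₂_mul,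
        eval₂_C, eval₂_X]
      push_cast
      linear_combination (b : ZMod n) * hau
    · simp only [SetLike.mem_coe, RingHom.mem_ker, coe_eval₂RingHom, eval₂_sub, eval₂_pow,
        eval₂_X, eval₂_one]
      push_cast
      rw [mul_pow, ← hpow, ← mul_pow, hau, one_pow, sub_self]
  exact ZMod.nonempty_ringEquiv_of_intCast_surjective n hn0 hsurj (Ideal.Quotient.lift I _ hker)

open Polynomial in
theorem statement14_general (m r : ℕ) (hr : 1 ≤ r) :
    Nonempty
      ((Polynomial ℤ ⧸ Ideal.span
          ({C ((m : ℤ) + 1) * X - C (m : ℤ), X ^ r - 1} : Set (Polynomial ℤ)))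
        ≃+* ZMod ((m + 1) ^ r - m ^ r)) := by
  refine nonempty_quotient_span_C_mul_X_sub_C_X_pow_sub_one_ringEquiv_zmod
    ⟨1, -1, by ring⟩ hr ?_
  have : m ^ r ≤ (m + 1) ^ r := Nat.pow_le_pow_left m.le_succ r
  push_cast [this]
  rfl

open Polynomial in
/-- The quotient of `ℤ[t]` by the ideal generated by `(m+1)·t - m` and `t^r - 1`
is isomorphic as a ring to `ℤ/((m+1)^r - m^r)`. -/
theorem statement14 (m r : ℕ) (hm : 1 ≤ m) (hr : 1 ≤ r) :
    Nonempty
      ((Polynomial ℤ ⧸ Ideal.span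
          ({C ((m : ℤ) + 1) * X - C (m : ℤ), X ^ r - 1} : Set (Polynomial ℤ)))
        ≃+* ZMod ((m + 1) ^ r - m ^ r)) :=
  statement14_general m r hr
end

section
/- For every odd integer m ≥ 23 and every integer i ≥ 0, one has 1 + 2i + ⌊(−2mi + 1)/(2m+1)⌋ + ⌊−i/2⌋ + ⌊(−i + 1)/3⌋ + ⌊(−i + (m−3)/2)/(m+1)⌋ ≥ 0. -/
/-!
Every floor is bounded below through `b * ⌊a / b⌋ > a - b` (integers `a`, `b > 0`), except the
first, which is `-i + ⌊(i + 1) / (2m + 1)⌋ ≥ -i`. Clearing the common denominator `6 (m + 1)`,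
these bounds make the integer sum larger than `-1`.
-/

theorem sub_lt_mul_floor {K : Type*} [Field K] [LinearOrder K] [IsStrictOrderedRing K]
    [FloorRing K] {x : K} {a b : ℤ} (hb : 0 < b) (hx : x * b = a) : a - b < b * ⌊x⌋ := by
  have hb' : (0 : K) < b := Int.cast_pos.2 hb
  have : (a : K) - b < b * ⌊x⌋ := by
    rw [← hx]
    nlinarith [Int.sub_one_lt_floor x]
  exact_mod_cast this

theorem statement16_general (m i : ℤ) (hm : 23 ≤ m) (hi : 0 ≤ i) :
    0 ≤ 1 + 2 * i
      + ⌊((-2 * (m : ℚ) * (i : ℚ) + 1) / (2 * (m : ℚ) + 1))⌋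
      + ⌊(-(i : ℚ) / 2)⌋
      + ⌊((-(i : ℚ) + 1) / 3)⌋
      + ⌊((-(i : ℚ) + ((m : ℚ) - 3) / 2) / ((m : ℚ) + 1))⌋ := by
  have hm' : (0 : ℚ) < 2 * m + 1 := by norm_cast; omega
  have h1 : -i ≤ ⌊((-2 * (m : ℚ) * (i : ℚ) + 1) / (2 * (m : ℚ) + 1))⌋ :=
    Int.le_floor.2 <| by
      rw [le_div_iff₀ hm']
      push_cast
      linarith [(Int.cast_nonneg hi : (0 : ℚ) ≤ i)]
  have h2 : -i - 2 < 2 * ⌊(-(i : ℚ) / 2)⌋ :=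
    sub_lt_mul_floor (by norm_num) (by push_cast; ring)
  have h3 : 1 - i - 3 < 3 * ⌊((-(i : ℚ) + 1) / 3)⌋ :=
    sub_lt_mul_floor (by norm_num) (by push_cast; ring)
  have h4 : m - 3 - 2 * i - (2 * m + 2) < (2 * m + 2) *
      ⌊((-(i : ℚ) + ((m : ℚ) - 3) / 2) / ((m : ℚ) + 1))⌋ :=
    sub_lt_mul_floor (by omega) (by push_cast; field_simp; ring)
  generalize ⌊((-2 * (m : ℚ) * (i : ℚ) + 1) / (2 * (m : ℚ) + 1))⌋ = f1 at *
  generalize ⌊(-(i : ℚ) / 2)⌋ = f2 at *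
  generalize ⌊((-(i : ℚ) + 1) / 3)⌋ = f3 at *
  generalize ⌊((-(i : ℚ) + ((m : ℚ) - 3) / 2) / ((m : ℚ) + 1))⌋ = f4 at *
  nlinarith

/-- For every odd integer `m ≥ 23` and every integer `i ≥ 0`,
`1 + 2i + ⌊(-2mi+1)/(2m+1)⌋ + ⌊-i/2⌋ + ⌊(-i+1)/3⌋ + ⌊(-i+(m-3)/2)/(m+1)⌋ ≥ 0`
(the increments `Δ_i` for the class `k₁` are nonnegative). -/
theorem statement16 (m i : ℤ) (hm : 23 ≤ m) (hmo : Odd m) (hi : 0 ≤ i) :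
    0 ≤ 1 + 2 * i
      + ⌊((-2 * (m : ℚ) * (i : ℚ) + 1) / (2 * (m : ℚ) + 1))⌋
      + ⌊(-(i : ℚ) / 2)⌋
      + ⌊((-(i : ℚ) + 1) / 3)⌋
      + ⌊((-(i : ℚ) + ((m : ℚ) - 3) / 2) / ((m : ℚ) + 1))⌋ :=
  statement16_general m i hm hi
end

section
/- For every odd integer m ≥ 23 and every integer i ≥ 0, one has 1 + 2i + ⌊(−2mi + 1)/(2m+1)⌋ + ⌊−i/2⌋ + ⌊−i/3⌋ + ⌊(−i + m − 2)/(m+1)⌋ ≥ 0. -/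
/-!
Write `⌊a/b⌋` as the integer quotient `a / b`. The first quotient is `-i + ⌊(i+1)/(2m+1)⌋ ≥ -i`,
and `2⌊-i/2⌋ ≥ -i-1`, `3⌊-i/3⌋ ≥ -i-2`, so `1 + i + ⌊-i/2⌋ + ⌊-i/3⌋` is at least about `i/6`.
The last quotient `D = ⌊(m-2-i)/(m+1)⌋` is negative only once `(m+1)(-D) ≤ i+2`, and then
`m ≥ 5` gives `6(-D) ≤ i+2`, which the `i/6` absorbs.
-/

theorem Rat.floor_intCast_div_intCast_of_pos (a : ℤ) {b : ℤ} (hb : 0 < b) :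
    ⌊(a / b : ℚ)⌋ = a / b := by
  lift b to ℕ using hb.le
  exact_mod_cast Rat.floor_intCast_div_natCast a b

theorem neg_le_neg_two_mul_mul_add_one_ediv {m i : ℤ} (hm : 0 ≤ m) (hi : -1 ≤ i) :
    -i ≤ (-2 * m * i + 1) / (2 * m + 1) := by
  rw [Int.le_ediv_iff_mul_le (by omega)]
  linarith

theorem neg_add_two_le_mul_ediv {m i : ℤ} (hm : 0 ≤ m) :
    -(i + 2) ≤ (m + 1) * ((-i + m - 2) / (m + 1)) := by
  have := Int.lt_mul_ediv_self_add (x := -i + m - 2) (by omega : 0 < m + 1)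
  linarith

theorem ediv_nonneg_or_neg_add_two_le_six_mul {m i : ℤ} (hm : 5 ≤ m) :
    0 ≤ (-i + m - 2) / (m + 1) ∨ -(i + 2) ≤ 6 * ((-i + m - 2) / (m + 1)) := by
  have h := neg_add_two_le_mul_ediv (i := i) (by omega : 0 ≤ m)
  rcases le_or_gt 0 ((-i + m - 2) / (m + 1)) with hD_nonneg | hD_neg
  · exact .inl hD_nonneg
  · right; nlinarith

theorem increment_nonneg_of_five_le {m i : ℤ} (hm : 5 ≤ m) (hi : 0 ≤ i) :
    0 ≤ 1 + 2 * i + (-2 * m * i + 1) / (2 * m + 1) + -i / 2 + -i / 3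
      + (-i + m - 2) / (m + 1) := by
  have hA := neg_le_neg_two_mul_mul_add_one_ediv (by omega : 0 ≤ m) (by omega : -1 ≤ i)
  have hD := ediv_nonneg_or_neg_add_two_le_six_mul (i := i) hm
  generalize (-2 * m * i + 1) / (2 * m + 1) = A at *
  generalize (-i + m - 2) / (m + 1) = D at *
  omega

theorem statement17_general (m i : ℤ) (hm : 23 ≤ m) (hi : 0 ≤ i) :
    0 ≤ 1 + 2 * i
      + ⌊((-2 * (m : ℚ) * (i : ℚ) + 1) / (2 * (m : ℚ) + 1))⌋
      + ⌊(-(i : ℚ) / 2)⌋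
      + ⌊(-(i : ℚ) / 3)⌋
      + ⌊((-(i : ℚ) + (m : ℚ) - 2) / ((m : ℚ) + 1))⌋ := by
  have key := increment_nonneg_of_five_le (by omega : 5 ≤ m) hi
  rw [← Rat.floor_intCast_div_intCast_of_pos _ (by omega : 0 < 2 * m + 1),
    ← Rat.floor_intCast_div_intCast_of_pos _ (by omega : (0 : ℤ) < 2),
    ← Rat.floor_intCast_div_intCast_of_pos _ (by omega : (0 : ℤ) < 3),
    ← Rat.floor_intCast_div_intCast_of_pos _ (by omega : 0 < m + 1)] at key
  push_cast at key
  exact key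

/-- For every odd integer `m ≥ 23` and every integer `i ≥ 0`,
`1 + 2i + ⌊(-2mi+1)/(2m+1)⌋ + ⌊-i/2⌋ + ⌊-i/3⌋ + ⌊(-i+m-2)/(m+1)⌋ ≥ 0`
(the increments `Δ_i` for the class `k₂` are nonnegative). -/
theorem statement17 (m i : ℤ) (hm : 23 ≤ m) (hmo : Odd m) (hi : 0 ≤ i) :
    0 ≤ 1 + 2 * i
      + ⌊((-2 * (m : ℚ) * (i : ℚ) + 1) / (2 * (m : ℚ) + 1))⌋
      + ⌊(-(i : ℚ) / 2)⌋
      + ⌊(-(i : ℚ) / 3)⌋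
      + ⌊((-(i : ℚ) + (m : ℚ) - 2) / ((m : ℚ) + 1))⌋ :=
  statement17_general m i hm hi
end
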